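/- arXiv:1405.4782 — 6 statements merged into one kernel-verified Lean document; each statement's English description precedes it below -/
import Mathlib

section
/- Let H : ℝ → ℝ be a distribution function (monotone nondecreasing, right-continuous, tending to 0 at −∞ and to 1 at +∞), and let μ be a probability measure on [0,∞) with μ({0}) = 0. Define F(x) = ∫₀^∞ H(x)^t dμ(t), with the convention that H(x)^t = 0 when H(x) = 0 and t > 0. Then F is again a distribution function: it is monotone nondecreasing, right-continuous, tends to 0 at −∞ and to 1 at +∞. -/
open MeasureTheory Filter Topology Set

/-- A distribution function on `ℝ`: monotone nondecreasing, right-continuous,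
tending to `0` at `−∞` and to `1` at `+∞`. -/
def IsDF (H : ℝ → ℝ) : Prop :=
  Monotone H ∧ (∀ x, ContinuousWithinAt H (Ici x) x) ∧
    Tendsto H atBot (𝓝 0) ∧ Tendsto H atTop (𝓝 1)

/-!
For `t ≥ 0` the map `b ↦ b ^ t` is continuous and monotone on `[0, 1]` with values in
`[0, 1]`, so monotonicity of `F` is integration of a pointwise inequality and each of the
three limits of `F` follows from the corresponding limit of `H` by dominated convergence
(dominating function `1`). The limits are `∫ 0 ^ t dμ = μ {0} = 0` and `∫ 1 ^ t dμ = 1`.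
-/

lemma IsDF.mem_Icc {H : ℝ → ℝ} (hH : IsDF H) (x : ℝ) : H x ∈ Icc 0 1 :=
  ⟨le_of_tendsto hH.2.2.1 (eventually_atBot.mpr ⟨x, fun _ hy => hH.1 hy⟩),
    ge_of_tendsto hH.2.2.2 (eventually_atTop.mpr ⟨x, fun _ hy => hH.1 hy⟩)⟩

section PowerMixture

variable {μ : Measure ℝ} (hμ : ∀ᵐ t ∂μ, 0 ≤ t)
include hμ

lemma ae_norm_rpow_le_one {b : ℝ} (hb : b ∈ Icc 0 1) : ∀ᵐ t ∂μ, ‖b ^ t‖ ≤ 1 := by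
  filter_upwards [hμ] with t ht
  rw [Real.norm_of_nonneg (Real.rpow_nonneg hb.1 t)]
  exact Real.rpow_le_one hb.1 hb.2 ht

variable [IsFiniteMeasure μ]

lemma integrable_rpow {b : ℝ} (hb : b ∈ Icc 0 1) : Integrable (fun t => b ^ t) μ :=
  (integrable_const 1).mono' (measurable_const.pow measurable_id).aestronglyMeasurable
    (ae_norm_rpow_le_one hμ hb)

lemma monotone_integral_rpow {H : ℝ → ℝ} (hmono : Monotone H) (hH : ∀ x, H x ∈ Icc 0 1) :
    Monotone fun x => ∫ t, H x ^ t ∂μ := fun x y hxy =>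
  integral_mono_ae (integrable_rpow hμ (hH x)) (integrable_rpow hμ (hH y)) <|
    hμ.mono fun _ ht => Real.rpow_le_rpow (hH x).1 (hmono hxy) ht

lemma tendsto_integral_rpow {α : Type*} {l : Filter α} [l.IsCountablyGenerated]
    {H : α → ℝ} {a : ℝ} (hH : ∀ x, H x ∈ Icc 0 1) (hHa : Tendsto H l (𝓝 a)) :
    Tendsto (fun x => ∫ t, H x ^ t ∂μ) l (𝓝 (∫ t, a ^ t ∂μ)) :=
  tendsto_integral_filter_of_dominated_convergence (fun _ => 1)
    (Eventually.of_forall fun x => (integrable_rpow hμ (hH x)).aestronglyMeasurable)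
    (Eventually.of_forall fun x => ae_norm_rpow_le_one hμ (hH x)) (integrable_const 1)
    (hμ.mono fun t ht => (Real.continuousAt_rpow_const a t (Or.inr ht)).tendsto.comp hHa)

end PowerMixture

/-- If `H` is a distribution function and `μ` a probability measure on `[0,∞)` with
`μ({0}) = 0`, then the power mixture `F(x) = ∫ H(x)^t dμ(t)` (with `H(x)^t = 0` when
`H(x) = 0` and `t > 0`, as is the case for `Real.rpow`) is again a distribution function. -/
theorem isDF_integral_rpow
    (H : ℝ → ℝ) (hH : IsDF H)
    (μ : Measure ℝ) [IsProbabilityMeasure μ] (hμ : μ (Iio 0) = 0) (hμ0 : μ {0} = 0)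
    (F : ℝ → ℝ) (hF : ∀ x, F x = ∫ t, H x ^ t ∂μ) :
    IsDF F := by
  obtain rfl : F = fun x => ∫ t, H x ^ t ∂μ := funext hF
  have hnonneg : ∀ᵐ t ∂μ, 0 ≤ t :=
    (measure_eq_zero_iff_ae_notMem.mp hμ).mono fun _ ht => not_lt.mp ht
  have hzero : ∫ t, (0 : ℝ) ^ t ∂μ = 0 := by
    rw [integral_congr_ae ((measure_eq_zero_iff_ae_notMem.mp hμ0).mono
      fun _ ht => Real.zero_rpow ht), integral_zero]
  have hone : ∫ t, (1 : ℝ) ^ t ∂μ = 1 := by simp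
  have h01 := hH.mem_Icc
  obtain ⟨hmono, hrc, hbot, htop⟩ := hH
  refine ⟨monotone_integral_rpow hnonneg hmono h01,
    fun x => tendsto_integral_rpow hnonneg h01 (hrc x), ?_, ?_⟩
  · simpa only [hzero] using tendsto_integral_rpow hnonneg h01 hbot
  · simpa only [hone] using tendsto_integral_rpow hnonneg h01 htop
end

section
/- Let φ : [0,∞) → (0,1] be a continuous, strictly decreasing bijection from [0,∞) onto (0,1] with φ(0) = 1, and suppose φ is differentiable at 0 with derivative φ'(0) = −1. Denote by φ⁻¹ : (0,1] → [0,∞) the inverse bijection. Then for every s ≥ 0, φ⁻¹(exp(−s·θ))/θ → s as θ → 0⁺, and consequently φ(φ⁻¹(exp(−s·θ))/θ) → φ(s) as θ → 0⁺. -/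
open Filter Topology Set

/-!
Put `t θ = ψ (exp (-(s θ)))`, so that `φ (t θ) = exp (-(s θ))`. Since `φ` is strictly decreasing
with `φ 0 = 1`, this forces `t θ → 0⁺`, and then
`t θ / θ = (t θ / (φ (t θ) - 1)) * ((exp (-(s θ)) - 1) / θ) → (-1)⁻¹ * (-s) = s`
because `φ'(0) = -1`. The second limit follows from continuity of `φ` at `s`.
-/

theorem StrictAntiOn.tendsto_of_tendsto_comp {α : Type*} {l : Filter α} {f : ℝ → ℝ} {a : ℝ}
    {u : α → ℝ} (hf : StrictAntiOn f (Ici a)) (hu : ∀ᶠ x in l, a ≤ u x)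
    (hfu : Tendsto (fun x => f (u x)) l (𝓝 (f a))) : Tendsto u l (𝓝 a) := by
  refine tendsto_order.2 ⟨fun b hb => hu.mono fun x hx => hb.trans_le hx, fun b hb => ?_⟩
  filter_upwards [hu, (tendsto_order.1 hfu).1 (f b) (hf self_mem_Ici hb.le hb)] with x hxa hxb
  exact (hf.lt_iff_gt hb.le hxa).1 hxb

theorem HasDerivWithinAt.tendsto_sub_div_sub {𝕜 : Type*} [NontriviallyNormedField 𝕜]
    {f : 𝕜 → 𝕜} {f' x : 𝕜} {s : Set 𝕜} (hf : HasDerivWithinAt f f' s x) (hf' : f' ≠ 0) :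
    Tendsto (fun y => (y - x) / (f y - f x)) (𝓝[s \ {x}] x) (𝓝 f'⁻¹) := by
  simpa only [slope_def_field, inv_div] using (hasDerivWithinAt_iff_tendsto_slope.1 hf).inv₀ hf'

theorem HasDerivWithinAt.tendsto_comp_sub_div {𝕜 : Type*} [NontriviallyNormedField 𝕜]
    {f : 𝕜 → 𝕜} {f' x c : 𝕜} {s : Set 𝕜} {l : Filter 𝕜} {u : 𝕜 → 𝕜}
    (hf : HasDerivWithinAt f f' s x) (hf' : f' ≠ 0) (hu : Tendsto u l (𝓝[s \ {x}] x))
    (hfu : Tendsto (fun θ => (f (u θ) - f x) / θ) l (𝓝 c)) :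
    Tendsto (fun θ => (u θ - x) / θ) l (𝓝 (f'⁻¹ * c)) := by
  have hne : ∀ᶠ θ in l, f (u θ) - f x ≠ 0 := by
    filter_upwards [hu.eventually ((hasDerivWithinAt_iff_tendsto_slope.1 hf).eventually_ne hf')]
      with θ hslope
    exact (div_ne_zero_iff.1 (slope_def_field f x (u θ) ▸ hslope)).1
  refine ((hf.tendsto_sub_div_sub hf').comp hu |>.mul hfu).congr' ?_
  filter_upwards [hne] with θ hθ
  simp only [Function.comp_apply]
  rw [div_mul_div_cancel₀ hθ]

theorem tendsto_exp_neg_mul_sub_one_div (s : ℝ) :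
    Tendsto (fun θ => (Real.exp (-(s * θ)) - 1) / θ) (𝓝[>] 0) (𝓝 (-s)) := by
  have h : HasDerivAt (fun θ => Real.exp (-(s * θ))) (-s) 0 := by
    simpa using ((hasDerivAt_id 0).const_mul s).neg.exp
  simpa [div_eq_inv_mul] using h.tendsto_slope_zero_right

theorem tendsto_inv_exp_neg_mul_div {φ ψ : ℝ → ℝ} (hanti : StrictAntiOn φ (Ici 0))
    (h0 : φ 0 = 1) (hderiv : HasDerivWithinAt φ (-1) (Ici 0) 0) (hψ : MapsTo ψ (Ioc 0 1) (Ici 0))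
    (hφψ : ∀ u ∈ Ioc (0 : ℝ) 1, φ (ψ u) = u) {s : ℝ} (hs : 0 ≤ s) :
    Tendsto (fun θ => ψ (Real.exp (-(s * θ))) / θ) (𝓝[>] 0) (𝓝 s) := by
  rcases hs.eq_or_lt with rfl | hs
  · have hψ1 : ψ 1 = 0 := by
      refine ((hanti.eq_iff_eq (hψ (right_mem_Ioc.2 one_pos)) self_mem_Ici).1 ?_).symm
      rw [hφψ 1 (right_mem_Ioc.2 one_pos), h0]
    simp [hψ1]
  set t := fun θ => ψ (Real.exp (-(s * θ)))
  have hexp : ∀ θ > 0, Real.exp (-(s * θ)) ∈ Ioo 0 1 := fun θ hθ =>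
    ⟨Real.exp_pos _, Real.exp_lt_one_iff.2 (neg_neg_of_pos (mul_pos hs hθ))⟩
  have hφt : ∀ θ > 0, φ (t θ) = Real.exp (-(s * θ)) := fun θ hθ =>
    hφψ _ (Ioo_subset_Ioc_self (hexp θ hθ))
  have ht_pos : ∀ θ > 0, 0 < t θ := fun θ hθ => by
    refine (hanti.lt_iff_gt (hψ (Ioo_subset_Ioc_self (hexp θ hθ))) self_mem_Ici).1 ?_
    rw [hφt θ hθ, h0]
    exact (hexp θ hθ).2
  have hφt_lim : Tendsto (fun θ => φ (t θ)) (𝓝[>] 0) (𝓝 (φ 0)) := by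
    refine Tendsto.congr' (eventually_nhdsWithin_of_forall fun θ hθ => (hφt θ hθ).symm) ?_
    rw [h0]
    exact tendsto_nhdsWithin_of_tendsto_nhds
      ((continuous_const.mul continuous_id).neg.rexp.tendsto' 0 1 (by simp))
  have ht : Tendsto t (𝓝[>] 0) (𝓝[Ici 0 \ {0}] 0) := by
    rw [Ici_sdiff_left]
    exact tendsto_nhdsWithin_iff.2 ⟨hanti.tendsto_of_tendsto_comp
      (eventually_nhdsWithin_of_forall fun θ hθ => (ht_pos θ hθ).le) hφt_lim,
      eventually_nhdsWithin_of_forall ht_pos⟩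
  have hφt_slope : Tendsto (fun θ => (φ (t θ) - φ 0) / θ) (𝓝[>] 0) (𝓝 (-s)) := by
    refine (tendsto_exp_neg_mul_sub_one_div s).congr' (eventually_nhdsWithin_of_forall ?_)
    intro θ hθ
    dsimp only
    rw [hφt θ hθ, h0]
  simpa using hderiv.tendsto_comp_sub_div (by norm_num) ht hφt_slope

/-- If `φ : [0,∞) → (0,1]` is a continuous strictly decreasing bijection with `φ(0) = 1`
and (one-sided) derivative `−1` at `0`, and `ψ` is its inverse, then for every `s ≥ 0`,
`ψ(exp(−sθ))/θ → s` and `φ(ψ(exp(−sθ))/θ) → φ(s)` as `θ → 0⁺`. -/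
theorem tendsto_inv_comp_exp_div
    (φ : ℝ → ℝ)
    (hcont : ContinuousOn φ (Ici 0))
    (hanti : StrictAntiOn φ (Ici 0))
    (hbij : BijOn φ (Ici 0) (Ioc 0 1))
    (h0 : φ 0 = 1)
    (hderiv : HasDerivWithinAt φ (-1) (Ici 0) 0)
    (ψ : ℝ → ℝ)
    (hψφ : ∀ s ∈ Ici (0 : ℝ), ψ (φ s) = s)
    (hφψ : ∀ u ∈ Ioc (0 : ℝ) 1, φ (ψ u) = u)
    (s : ℝ) (hs : 0 ≤ s) :
    Tendsto (fun θ : ℝ => ψ (Real.exp (-(s * θ))) / θ) (𝓝[>] 0) (𝓝 s) ∧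
      Tendsto (fun θ : ℝ => φ (ψ (Real.exp (-(s * θ))) / θ)) (𝓝[>] 0) (𝓝 (φ s)) := by
  have hψ : MapsTo ψ (Ioc 0 1) (Ici 0) := fun u hu => by
    obtain ⟨x, hx, rfl⟩ := hbij.surjOn hu
    rwa [hψφ x hx]
  have hlim := tendsto_inv_exp_neg_mul_div hanti h0 hderiv hψ hφψ hs
  refine ⟨hlim, (hcont s hs).tendsto.comp (tendsto_nhdsWithin_iff.2 ⟨hlim, ?_⟩)⟩
  filter_upwards [self_mem_nhdsWithin] with θ (hθ : 0 < θ)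
  have hexp : Real.exp (-(s * θ)) ∈ Ioc 0 1 :=
    ⟨Real.exp_pos _, Real.exp_le_one_iff.2 (neg_nonpos.2 (mul_nonneg hs hθ.le))⟩
  exact div_nonneg (hψ hexp) hθ.le
end

section
/- Let μ be a probability measure on [0,∞) with μ({0}) = 0, and let φ(s) = ∫₀^∞ exp(−s·t) dμ(t) be its Laplace transform. Let H : ℝ → ℝ be a distribution function (monotone nondecreasing, right-continuous, tending to 0 at −∞ and to 1 at +∞). For each n ≥ 1 define G_n(x) = max(0, 1 + log(H(x))/n), with the convention G_n(x) = 0 when H(x) = 0. Then each G_n is a distribution function, and for every x ∈ ℝ, φ(n·(1 − G_n(x))) converges as n → ∞ to ∫₀^∞ H(x)^t dμ(t) (with the convention H(x)^t = 0 when H(x) = 0 and t > 0). -/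
open MeasureTheory Filter Topology Set

namespace IsDF

variable {H : ℝ → ℝ}

theorem nonneg (hH : IsDF H) (x : ℝ) : 0 ≤ H x :=
  le_of_tendsto hH.2.2.1 (eventually_atBot.2 ⟨x, fun _ hy => hH.1 hy⟩)

theorem le_one (hH : IsDF H) (x : ℝ) : H x ≤ 1 :=
  ge_of_tendsto hH.2.2.2 (eventually_atTop.2 ⟨x, fun _ hy => hH.1 hy⟩)

theorem mem_Icc_s6 (hH : IsDF H) (x : ℝ) : H x ∈ Icc 0 1 :=
  ⟨hH.nonneg x, hH.le_one x⟩

theorem comp (hH : IsDF H) {g : ℝ → ℝ} (hmono : MonotoneOn g (Icc 0 1))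
    (hcont : ContinuousOn g (Icc 0 1)) (h0 : g 0 = 0) (h1 : g 1 = 1) : IsDF (g ∘ H) := by
  have hmem := hH.mem_Icc_s6
  obtain ⟨hHmono, hHrc, hHbot, hHtop⟩ := hH
  have hlim : ∀ {l : Filter ℝ} {a : ℝ}, a ∈ Icc (0 : ℝ) 1 → Tendsto H l (𝓝 a) →
      Tendsto (g ∘ H) l (𝓝 (g a)) := fun {_ a} ha hHa =>
    (hcont a ha).tendsto.comp (tendsto_nhdsWithin_iff.2 ⟨hHa, .of_forall hmem⟩)
  refine ⟨fun a b hab => hmono (hmem a) (hmem b) (hHmono hab),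
    fun x => (hcont (H x) (hmem x)).comp (hHrc x) fun y _ => hmem y, ?_, ?_⟩
  · simpa [h0] using hlim ⟨le_rfl, zero_le_one⟩ hHbot
  · simpa [h1] using hlim ⟨zero_le_one, le_rfl⟩ hHtop

end IsDF

-- The case `h = 0` is split off because `Real.log 0 = 0` would make the formula give `1` there.
noncomputable def truncLogAffine (c h : ℝ) : ℝ := if h = 0 then 0 else max 0 (1 + Real.log h / c)

section truncLogAffine

variable {c h : ℝ}

@[simp] theorem truncLogAffine_zero_right (c : ℝ) : truncLogAffine c 0 = 0 := if_pos rfl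

@[simp] theorem truncLogAffine_one_right (c : ℝ) : truncLogAffine c 1 = 1 := by
  simp [truncLogAffine]

theorem truncLogAffine_nonneg (c h : ℝ) : 0 ≤ truncLogAffine c h := by
  unfold truncLogAffine; split_ifs <;> simp

theorem truncLogAffine_of_pos (hh : 0 < h) : truncLogAffine c h = max 0 (1 + Real.log h / c) :=
  if_neg hh.ne'

theorem truncLogAffine_eq_zero (hc : 0 < c) (h0 : 0 ≤ h) (hh : h ≤ Real.exp (-c)) :
    truncLogAffine c h = 0 := by
  rcases h0.eq_or_lt with rfl | hpos
  · exact truncLogAffine_zero_right c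
  have : Real.log h / c ≤ -1 := by
    rw [div_le_iff₀ hc]
    linarith [(Real.log_le_iff_le_exp hpos).2 hh]
  rw [truncLogAffine_of_pos hpos, max_eq_left (by linarith)]

theorem mul_one_sub_truncLogAffine (hc : 0 < c) (hh : Real.exp (-c) ≤ h) :
    c * (1 - truncLogAffine c h) = -Real.log h := by
  have hpos := (Real.exp_pos _).trans_le hh
  have : -1 ≤ Real.log h / c := by
    rw [le_div_iff₀ hc]
    linarith [(Real.le_log_iff_exp_le hpos).2 hh]
  rw [truncLogAffine_of_pos hpos, max_eq_right (by linarith)]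
  field_simp
  ring

theorem monotoneOn_truncLogAffine (hc : 0 ≤ c) : MonotoneOn (truncLogAffine c) (Ici 0) := by
  intro a ha b _ hab
  rcases (mem_Ici.1 ha).eq_or_lt with rfl | hapos
  · simpa using truncLogAffine_nonneg c b
  rw [truncLogAffine_of_pos hapos, truncLogAffine_of_pos (hapos.trans_le hab)]
  gcongr

theorem continuousOn_truncLogAffine (hc : 0 < c) : ContinuousOn (truncLogAffine c) (Ici 0) := by
  intro a ha
  rcases (mem_Ici.1 ha).eq_or_lt with rfl | hapos
  · have : truncLogAffine c =ᶠ[𝓝[Ici 0] 0] fun _ => 0 := by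
      filter_upwards [self_mem_nhdsWithin,
        nhdsWithin_le_nhds (eventually_le_nhds (Real.exp_pos (-c)))] with h h0 hh
      exact truncLogAffine_eq_zero hc h0 hh
    simpa [ContinuousWithinAt] using this.tendsto
  · refine ContinuousAt.continuousWithinAt ?_
    have : (fun h => max 0 (1 + Real.log h / c)) =ᶠ[𝓝 a] truncLogAffine c := by
      filter_upwards [eventually_gt_nhds hapos] with h hh using (truncLogAffine_of_pos hh).symm
    refine ContinuousAt.congr ?_ this
    exact continuousAt_const.max
      (continuousAt_const.add ((Real.continuousAt_log hapos.ne').div_const _))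

end truncLogAffine

section Laplace

variable {μ : Measure ℝ}

theorem tendsto_integral_exp_neg_natCast_mul [IsFiniteMeasure μ] (hμ : ∀ᵐ t ∂μ, 0 < t) :
    Tendsto (fun n : ℕ => ∫ t, Real.exp (-n * t) ∂μ) atTop (𝓝 0) := by
  rw [← integral_zero ℝ ℝ]
  refine tendsto_integral_of_dominated_convergence (fun _ => 1)
    (fun _ => (by fun_prop : Continuous _).aestronglyMeasurable) (integrable_const 1) ?_ ?_
  · intro n
    filter_upwards [hμ] with t ht
    rw [Real.norm_eq_abs, Real.abs_exp, Real.exp_le_one_iff, neg_mul, neg_nonpos]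
    positivity
  · filter_upwards [hμ] with t ht
    simpa only [neg_mul, Function.comp_def] using
      Real.tendsto_exp_atBot.comp (tendsto_neg_atTop_atBot.comp
        (tendsto_natCast_atTop_atTop.atTop_mul_const ht))

theorem integral_zero_rpow (hμ : ∀ᵐ t ∂μ, t ≠ 0) : ∫ t, (0 : ℝ) ^ t ∂μ = 0 :=
  integral_eq_zero_of_ae (hμ.mono fun _ => Real.zero_rpow)

theorem tendsto_integral_exp_neg_mul_one_sub_truncLogAffine [IsFiniteMeasure μ]
    (hμ : ∀ᵐ t ∂μ, 0 < t) {h : ℝ} (h0 : 0 ≤ h) :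
    Tendsto (fun n : ℕ => ∫ t, Real.exp (-(n * (1 - truncLogAffine n h)) * t) ∂μ) atTop
      (𝓝 (∫ t, h ^ t ∂μ)) := by
  rcases h0.eq_or_lt with rfl | hpos
  · simpa [integral_zero_rpow (hμ.mono fun _ => ne_of_gt)] using
      tendsto_integral_exp_neg_natCast_mul hμ
  refine tendsto_const_nhds.congr' ?_
  filter_upwards [eventually_gt_atTop 0, eventually_ge_atTop ⌈-Real.log h⌉₊] with n hn hlog
  have hexp : Real.exp (-n) ≤ h := by
    rw [← Real.le_log_iff_exp_le hpos, neg_le]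
    exact (Nat.le_ceil _).trans (by exact_mod_cast hlog)
  rw [mul_one_sub_truncLogAffine (by exact_mod_cast hn) hexp, neg_neg]
  simp_rw [Real.rpow_def_of_pos hpos]

end Laplace

/-- Constructive half of the de Finetti-type theorem: for a distribution function `H`,
a probability measure `μ` on `[0,∞)` with `μ({0}) = 0` with Laplace transform `φ`, and
`Gₙ(x) = max(0, 1 + log H(x)/n)` (with `Gₙ(x) = 0` when `H(x) = 0`), each `Gₙ` is a
distribution function and `φ(n(1 − Gₙ(x))) → ∫ H(x)^t dμ(t)` for every `x`. -/
theorem deFinetti_sufficiency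
    (μ : Measure ℝ) [IsProbabilityMeasure μ] (hμ : μ (Iio 0) = 0) (hμ0 : μ {0} = 0)
    (H : ℝ → ℝ) (hH : IsDF H)
    (G : ℕ → ℝ → ℝ)
    (hG : ∀ n x, G n x = if H x = 0 then 0 else max 0 (1 + Real.log (H x) / n)) :
    (∀ n : ℕ, 1 ≤ n → IsDF (G n)) ∧
      ∀ x, Tendsto (fun n : ℕ => ∫ t, Real.exp (-((n : ℝ) * (1 - G n x)) * t) ∂μ)
        atTop (𝓝 (∫ t, H x ^ t ∂μ)) := by
  have hGH : ∀ n, G n = truncLogAffine n ∘ H := fun n => funext (hG n)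
  have hμpos : ∀ᵐ t ∂μ, 0 < t := by
    rw [ae_iff]
    simp_rw [not_lt]
    change μ (Iic 0) = 0
    rw [← Iio_union_right]
    exact measure_union_null hμ hμ0
  refine ⟨fun n hn => ?_, fun x => ?_⟩
  · have hc : (0 : ℝ) < n := by exact_mod_cast hn
    rw [hGH]
    exact hH.comp ((monotoneOn_truncLogAffine hc.le).mono Icc_subset_Ici_self)
      ((continuousOn_truncLogAffine hc).mono Icc_subset_Ici_self)
      (truncLogAffine_zero_right _) (truncLogAffine_one_right _)
  · simp only [hGH, Function.comp_apply]
    exact tendsto_integral_exp_neg_mul_one_sub_truncLogAffine hμpos (hH.nonneg x)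
end

section
/- For each n ≥ 1 let ν_n be a probability measure on ℕ, and suppose the pushforward of ν_n under the map k ↦ k/n converges weakly (in the topology of weak convergence of probability measures on ℝ) to a probability measure μ with μ((−∞,0)) = 0. Let (u_n) be a sequence of real numbers with 0 ≤ u_n ≤ 1 such that u_n^n → h for some h with 0 < h ≤ 1. Then ∑_{k=0}^∞ u_n^k · ν_n({k}) converges as n → ∞ to ∫₀^∞ h^t dμ(t), where h^t = exp(t·log h). -/
open MeasureTheory Filter Topology Set

/-! With `aₙ = log (uₙⁿ) → log h` one has `uₙᵏ = exp ((k/n) aₙ) = g_{aₙ} (k/n)`, where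
`g_c t = exp (c t)` is monotone in `c`. So for any `c < log h < c'` the sums are eventually squeezed
between `∫ g_c` and `∫ g_{c'}` against the law of `Nₙ/n`; weak convergence handles each fixed `g_c`,
and continuity of `c ↦ ∫ g_c dμ` closes the squeeze. -/

theorem tendsto_apply_of_monotone_of_tendsto {ι : Type*} {l : Filter ι} {F : ℝ → ι → ℝ}
    {G : ℝ → ℝ} {a : ι → ℝ} {L : ℝ} (hF : ∀ i, Monotone (F · i))
    (hFG : ∀ c, Tendsto (F c) l (𝓝 (G c))) (hG : ContinuousAt G L)
    (ha : Tendsto a l (𝓝 L)) :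
    Tendsto (fun i => F (a i) i) l (𝓝 (G L)) := by
  refine tendsto_order.2 ⟨fun b hb => ?_, fun b hb => ?_⟩
  · obtain ⟨c, hcb, hcL⟩ := ((hG.eventually (lt_mem_nhds hb)).filter_mono
      nhdsWithin_le_nhds).and self_mem_nhdsWithin |>.exists (f := 𝓝[<] L)
    filter_upwards [(hFG c).eventually (lt_mem_nhds hcb), ha.eventually (lt_mem_nhds hcL)]
      with i hbF hca
    exact hbF.trans_le (hF i hca.le)
  · obtain ⟨c, hcb, hcL⟩ := ((hG.eventually (gt_mem_nhds hb)).filter_mono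
      nhdsWithin_le_nhds).and self_mem_nhdsWithin |>.exists (f := 𝓝[>] L)
    filter_upwards [(hFG c).eventually (gt_mem_nhds hcb), ha.eventually (gt_mem_nhds hcL)]
      with i hFb hac
    exact (hF i hac.le).trans_lt hFb

lemma exp_max_mul_min_mem_Icc (c t : ℝ) : Real.exp (max t 0 * min c 0) ∈ Icc (0 : ℝ) 1 :=
  ⟨(Real.exp_pos _).le, Real.exp_le_one_iff.2 <|
    mul_nonpos_of_nonneg_of_nonpos (le_max_right t 0) (min_le_right c 0)⟩

/-- `t ↦ exp (c t)` on `t ≥ 0` for `c ≤ 0`; clipping `t` and `c` makes it bounded on `ℝ` and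
monotone in `c`. -/
noncomputable def cappedExp (c : ℝ) : BoundedContinuousFunction ℝ ℝ :=
  BoundedContinuousFunction.mkOfBound ⟨fun t => Real.exp (max t 0 * min c 0), by fun_prop⟩ 1
    fun s t => by
      simpa using Real.dist_le_of_mem_Icc (exp_max_mul_min_mem_Icc c s)
        (exp_max_mul_min_mem_Icc c t)

lemma cappedExp_apply (c t : ℝ) : cappedExp c t = Real.exp (max t 0 * min c 0) := rfl

lemma cappedExp_apply_of_nonneg {c t : ℝ} (hc : c ≤ 0) (ht : 0 ≤ t) :
    cappedExp c t = Real.exp (t * c) := by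
  rw [cappedExp_apply, max_eq_left ht, min_eq_left hc]

lemma cappedExp_mono_left (t : ℝ) : Monotone (cappedExp · t) := fun c c' hcc' => by
  simp only [cappedExp_apply, Real.exp_le_exp]
  exact mul_le_mul_of_nonneg_left (min_le_min_right 0 hcc') (le_max_right t 0)

lemma norm_cappedExp_apply_le (c t : ℝ) : ‖cappedExp c t‖ ≤ 1 := by
  obtain ⟨h0, h1⟩ := exp_max_mul_min_mem_Icc c t
  rwa [cappedExp_apply, Real.norm_of_nonneg h0]

lemma continuous_integral_cappedExp (μ : Measure ℝ) [IsFiniteMeasure μ] :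
    Continuous fun c => ∫ t, cappedExp c t ∂μ :=
  continuous_of_dominated (fun c => (cappedExp c).continuous.aestronglyMeasurable)
    (fun c => ae_of_all _ (norm_cappedExp_apply_le c)) (integrable_const 1)
    (ae_of_all _ fun t => by simp only [cappedExp_apply]; fun_prop)

lemma integral_cappedExp_of_nonpos {μ : Measure ℝ} (hμ : μ (Iio 0) = 0) {c : ℝ} (hc : c ≤ 0) :
    ∫ t, cappedExp c t ∂μ = ∫ t, Real.exp (t * c) ∂μ := by
  refine integral_congr_ae ?_
  filter_upwards [measure_eq_zero_iff_ae_notMem.1 hμ] with t ht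
  exact cappedExp_apply_of_nonneg hc (not_lt.1 ht)

lemma integral_map_natCast_div {ν : Measure ℕ} [IsFiniteMeasure ν] (n : ℕ)
    (f : BoundedContinuousFunction ℝ ℝ) :
    ∫ x, f x ∂(Measure.map (fun k : ℕ => (k : ℝ) / n) ν)
      = ∑' k : ℕ, f ((k : ℝ) / n) * (ν {k}).toReal := by
  have hmeas : Measurable fun k : ℕ => (k : ℝ) / n := measurable_from_top
  rw [integral_map hmeas.aemeasurable f.continuous.aestronglyMeasurable,
    integral_countable (f := fun k : ℕ => f ((k : ℝ) / n))
      ((f.integrable (ν.map _)).comp_measurable hmeas)]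
  exact tsum_congr fun k => mul_comm _ _

lemma Real.exp_div_mul_log_pow {u : ℝ} (hu : 0 < u) {n : ℕ} (hn : n ≠ 0) (k : ℕ) :
    Real.exp ((k : ℝ) / n * Real.log (u ^ n)) = u ^ k := by
  have hexp : (k : ℝ) / n * (n * Real.log u) = k * Real.log u := by field_simp
  rw [Real.log_pow, hexp, ← Real.log_pow, Real.exp_log (pow_pos hu k)]

/-- Pointwise transfer theorem for maxima: if `νₙ` are probability laws on `ℕ` whose
pushforwards under `k ↦ k/n` converge weakly to a probability measure `μ` on `[0,∞)`,
and `uₙ ∈ [0,1]` with `uₙⁿ → h`, `0 < h ≤ 1`, then the random maximum probabilities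
`∑ₖ uₙᵏ νₙ({k})` converge to `∫ h^t dμ(t)` where `h^t = exp(t·log h)`. -/
theorem transfer_theorem_for_maxima
    (ν : ℕ → Measure ℕ) [∀ n, IsProbabilityMeasure (ν n)]
    (μ : Measure ℝ) [IsProbabilityMeasure μ] (hμ : μ (Iio 0) = 0)
    (hweak : ∀ f : BoundedContinuousFunction ℝ ℝ,
      Tendsto (fun n : ℕ => ∫ x, f x ∂(Measure.map (fun k : ℕ => (k : ℝ) / n) (ν n)))
        atTop (𝓝 (∫ x, f x ∂μ)))
    (u : ℕ → ℝ) (hu : ∀ n, 0 ≤ u n ∧ u n ≤ 1)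
    (h : ℝ) (h0 : 0 < h) (h1 : h ≤ 1)
    (hpow : Tendsto (fun n : ℕ => u n ^ n) atTop (𝓝 h)) :
    Tendsto (fun n : ℕ => ∑' k : ℕ, u n ^ k * ((ν n) {k}).toReal)
      atTop (𝓝 (∫ t, Real.exp (t * Real.log h) ∂μ)) := by
  have hlog : Tendsto (fun n => Real.log (u n ^ n)) atTop (𝓝 (Real.log h)) :=
    (Real.continuousAt_log h0.ne').tendsto.comp hpow
  have hlim := tendsto_apply_of_monotone_of_tendsto
    (F := fun c (n : ℕ) => ∫ x, cappedExp c x ∂(Measure.map (fun k : ℕ => (k : ℝ) / n) (ν n)))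
    (fun n c c' hcc' => integral_mono ((cappedExp c).integrable _) ((cappedExp c').integrable _)
      fun t => cappedExp_mono_left t hcc')
    (fun c => hweak (cappedExp c)) (continuous_integral_cappedExp μ).continuousAt hlog
  rw [← integral_cappedExp_of_nonpos hμ (Real.log_nonpos h0.le h1)]
  refine hlim.congr' ?_
  filter_upwards [hpow.eventually (lt_mem_nhds h0), eventually_ne_atTop 0] with n hun hn
  have hupos : 0 < u n := (hu n).1.lt_of_ne' fun hu0 => by simp [hu0, hn] at hun
  have hlog_nonpos : Real.log (u n ^ n) ≤ 0 :=
    Real.log_nonpos (by positivity) (pow_le_one₀ (hu n).1 (hu n).2)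
  rw [integral_map_natCast_div]
  refine tsum_congr fun k => ?_
  rw [cappedExp_apply_of_nonneg hlog_nonpos (by positivity), Real.exp_div_mul_log_pow hupos hn]
end

section
/- Let φ : [0,∞) → (0,1] be a continuous, strictly decreasing bijection from [0,∞) onto (0,1] with φ(0) = 1, differentiable at 0 with derivative φ'(0) = −1, and let φ⁻¹ : (0,1] → [0,∞) denote the inverse bijection. Let (g_n) be a sequence with 0 < g_n ≤ 1 and let c ≥ 0. Then φ(n·φ⁻¹(g_n)) converges to φ(c) as n → ∞ if and only if g_n^n converges to exp(−c). -/
open Filter Topology Set Asymptotics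

/-!
Write `sₙ = ψ(gₙ)`, so that `gₙ = φ(sₙ)`. Since `φ` is a continuous strictly decreasing map of the
half-line, `φ(n sₙ) → φ(c)` iff `n sₙ → c`; since `exp` is an embedding, `gₙⁿ → e^{-c}` iff
`n log gₙ → -c`. Either limit forces `sₙ → 0`, and `φ'(0) = -1` gives `log φ(s) ~ -s` as `s → 0⁺`,
so `n log gₙ = n log φ(sₙ) ~ -n sₙ` and the two conditions coincide.
-/

section StrictAntiOn

variable {α β γ : Type*} [LinearOrder α] [TopologicalSpace α] [OrderTopology α]
  [LinearOrder β] [TopologicalSpace β] [OrderTopology β]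
  {f : α → β} {s : Set α} {a : γ → α} {l : Filter γ} {c : α}

theorem StrictAntiOn.tendsto_of_tendsto_comp_s9 (hs : s.OrdConnected) (hf : StrictAntiOn f s)
    (ha : ∀ x, a x ∈ s) (hc : c ∈ s) (h : Tendsto (f ∘ a) l (𝓝 (f c))) : Tendsto a l (𝓝 c) := by
  rw [tendsto_order]
  constructor
  · intro b hb
    by_cases hbs : b ∈ s
    · filter_upwards [h.eventually_lt_const (hf hbs hc hb)] with x hx
      exact lt_of_not_ge fun hle => hx.not_ge (hf.antitoneOn (ha x) hbs hle)
    · exact .of_forall fun x => lt_of_not_ge fun hle => hbs (hs.out (ha x) hc ⟨hle, hb.le⟩)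
  · intro b hb
    by_cases hbs : b ∈ s
    · filter_upwards [h.eventually_const_lt (hf hc hbs hb)] with x hx
      exact lt_of_not_ge fun hle => hx.not_ge (hf.antitoneOn hbs (ha x) hle)
    · exact .of_forall fun x => lt_of_not_ge fun hle => hbs (hs.out hc (ha x) ⟨hb.le, hle⟩)

theorem StrictAntiOn.tendsto_comp_iff (hs : s.OrdConnected) (hf : StrictAntiOn f s)
    (ha : ∀ x, a x ∈ s) (hc : c ∈ s) (hfc : ContinuousWithinAt f s c) :
    Tendsto (f ∘ a) l (𝓝 (f c)) ↔ Tendsto a l (𝓝 c) :=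
  ⟨hf.tendsto_of_tendsto_comp_s9 hs ha hc, fun h =>
    hfc.tendsto.comp (tendsto_nhdsWithin_iff.2 ⟨h, .of_forall ha⟩)⟩

end StrictAntiOn

theorem tendsto_zero_of_tendsto_natCast_mul {x : ℕ → ℝ} {L : ℝ}
    (h : Tendsto (fun n : ℕ => n * x n) atTop (𝓝 L)) : Tendsto x atTop (𝓝 0) := by
  refine (h.div_atTop tendsto_natCast_atTop_atTop).congr' ?_
  filter_upwards [eventually_ne_atTop 0] with n hn
  field_simp

theorem tendsto_pow_iff_tendsto_natCast_mul_log {g : ℕ → ℝ} (hg : ∀ n, 0 < g n)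
    {l : Filter ℕ} (a : ℝ) :
    Tendsto (fun n => g n ^ n) l (𝓝 (Real.exp a)) ↔
      Tendsto (fun n : ℕ => n * Real.log (g n)) l (𝓝 a) := by
  rw [Real.isOpenEmbedding_exp.tendsto_nhds_iff (f := fun n : ℕ => n * Real.log (g n))]
  refine tendsto_congr fun n => ?_
  simp [Real.exp_nat_mul, Real.exp_log (hg n)]

theorem HasDerivWithinAt.isEquivalent_sub {𝕜 : Type*} [NontriviallyNormedField 𝕜]
    {f : 𝕜 → 𝕜} {f' x : 𝕜} {s : Set 𝕜} (hf : HasDerivWithinAt f f' s x) (hf' : f' ≠ 0) :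
    (fun y => f y - f x) ~[𝓝[s] x] fun y => f' * (y - x) := by
  refine IsLittleO.trans_isBigO ?_ (isBigO_self_const_mul hf' (fun y => y - x) _)
  exact (hasDerivWithinAt_iff_isLittleO.1 hf).congr_left fun y => by
    simp only [Pi.sub_apply, smul_eq_mul, mul_comm]

section LogComp

variable {φ : ℝ → ℝ} {s : Set ℝ}

theorem isEquivalent_log_comp_neg (h0 : φ 0 = 1) (hφ : HasDerivWithinAt φ (-1) s 0) :
    (fun t => Real.log (φ t)) ~[𝓝[s] 0] Neg.neg := by
  have hlog : HasDerivWithinAt (fun t => Real.log (φ t)) (-1) s 0 := by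
    simpa [h0] using hφ.log (by simp [h0])
  simpa [h0] using hlog.isEquivalent_sub (by norm_num)

theorem tendsto_mul_log_comp_iff (h0 : φ 0 = 1) (hφ : HasDerivWithinAt φ (-1) s 0)
    {ι : Type*} {l : Filter ι} {w x : ι → ℝ} (hx : Tendsto x l (𝓝[s] 0)) (c : ℝ) :
    Tendsto (fun i => w i * Real.log (φ (x i))) l (𝓝 (-c)) ↔
      Tendsto (fun i => w i * x i) l (𝓝 c) := by
  have h : (fun i => w i * Real.log (φ (x i))) ~[l] fun i => -(w i * x i) := by
    simpa only [Pi.mul_def, Function.comp_def, mul_neg] using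
      IsEquivalent.refl.mul ((isEquivalent_log_comp_neg h0 hφ).comp_tendsto hx)
  rw [h.tendsto_nhds_iff, tendsto_neg_iff]

end LogComp

/-- Pointwise one-dimensional form of Theorem 2.4: with `φ` the standard solution of the
Poincaré equation (continuous strictly decreasing bijection of `[0,∞)` onto `(0,1]` with
`φ(0) = 1` and `φ'(0) = −1`) and `ψ` its inverse, for `0 < gₙ ≤ 1` and `c ≥ 0`,
`φ(n·ψ(gₙ)) → φ(c)` iff `gₙⁿ → exp(−c)`. -/
theorem random_max_tendsto_iff_pow_tendsto
    (φ : ℝ → ℝ)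
    (hcont : ContinuousOn φ (Ici 0))
    (hanti : StrictAntiOn φ (Ici 0))
    (hbij : BijOn φ (Ici 0) (Ioc 0 1))
    (h0 : φ 0 = 1)
    (hderiv : HasDerivWithinAt φ (-1) (Ici 0) 0)
    (ψ : ℝ → ℝ)
    (hψφ : ∀ s ∈ Ici (0 : ℝ), ψ (φ s) = s)
    (hφψ : ∀ u ∈ Ioc (0 : ℝ) 1, φ (ψ u) = u)
    (g : ℕ → ℝ) (hg : ∀ n, 0 < g n ∧ g n ≤ 1)
    (c : ℝ) (hc : 0 ≤ c) :
    Tendsto (fun n : ℕ => φ ((n : ℝ) * ψ (g n))) atTop (𝓝 (φ c)) ↔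
      Tendsto (fun n : ℕ => g n ^ n) atTop (𝓝 (Real.exp (-c))) := by
  have hφψg (n : ℕ) : φ (ψ (g n)) = g n := hφψ _ (hg n)
  have hψg (n : ℕ) : 0 ≤ ψ (g n) := by
    obtain ⟨t, ht, hφt⟩ := hbij.surjOn (hg n)
    rwa [← hφt, hψφ t ht]
  have key (hs : Tendsto (fun n => ψ (g n)) atTop (𝓝 0)) :
      Tendsto (fun n : ℕ => n * Real.log (g n)) atTop (𝓝 (-c)) ↔
        Tendsto (fun n : ℕ => n * ψ (g n)) atTop (𝓝 c) := by
    simpa only [hφψg] using tendsto_mul_log_comp_iff h0 hderiv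
      (tendsto_nhdsWithin_iff.2 ⟨hs, .of_forall hψg⟩) c
  rw [← Function.comp_def φ, hanti.tendsto_comp_iff ordConnected_Ici
      (fun n => mul_nonneg n.cast_nonneg (hψg n)) hc (hcont c hc),
    tendsto_pow_iff_tendsto_natCast_mul_log fun n => (hg n).1]
  constructor
  · intro h
    exact (key (tendsto_zero_of_tendsto_natCast_mul h)).2 h
  · intro h
    have hg_one : Tendsto (fun n => φ (ψ (g n))) atTop (𝓝 (φ 0)) := by
      simpa only [hφψg, h0, Function.comp_def, Real.exp_log (hg _).1, Real.exp_zero] using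
        (Real.continuous_exp.tendsto 0).comp (tendsto_zero_of_tendsto_natCast_mul h)
    exact (key (hanti.tendsto_of_tendsto_comp_s9 ordConnected_Ici hψg self_mem_Ici hg_one)).1 h
end

section
/- Let H : ℝ → ℝ be a distribution function (monotone nondecreasing, right-continuous, tending to 0 at −∞ and to 1 at +∞). Then there exists a Borel measure μ on ℝ (with values in [0,∞]) such that for every x ∈ ℝ: μ((x,∞)) = ∞ if H(x) = 0, and μ((x,∞)) is finite with H(x) = exp(−μ((x,∞))) if H(x) > 0. -/
open MeasureTheory Filter Topology Set

/-!
With `G = -log H` (so `G = ∞` where `H = 0`), `G : ℝ → [0, ∞]` is antitone, right-continuous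
and tends to `0` at `+∞`, and we need a measure with `μ (x, ∞) = G x`. Cut `G` into the layers
`min G (n + 1) - n`, which take values in `[0, 1]`: minus a layer is a bounded Stieltjes
function, whose measure gives the layer as tail function, and the sum over `n` of these
measures has tail function `∑ₙ (min G (n + 1) - n) = G`.
-/

open scoped ENNReal

noncomputable section

def layer (n : ℕ) (t : ℝ≥0∞) : ℝ≥0∞ := min t (n + 1) - n

lemma monotone_layer (n : ℕ) : Monotone (layer n) :=
  fun _ _ hst => tsub_le_tsub_right (min_le_min_right _ hst) _

lemma continuous_layer (n : ℕ) : Continuous (layer n) :=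
  (ENNReal.continuous_sub_right _).comp (continuous_id.min continuous_const)

lemma layer_zero_right (n : ℕ) : layer n 0 = 0 := by
  simp [layer]

lemma layer_ne_top (n : ℕ) (t : ℝ≥0∞) : layer n t ≠ ∞ :=
  ne_top_of_le_ne_top (by simp) (tsub_le_self.trans (min_le_right t _))

lemma sum_range_layer (t : ℝ≥0∞) (N : ℕ) : ∑ n ∈ Finset.range N, layer n t = min t N := by
  induction N with
  | zero => simp
  | succ N ih =>
    rw [Finset.sum_range_succ, ih, layer, Nat.cast_succ]
    rcases le_total t N with htN | hNt
    · rw [min_eq_left htN, min_eq_left (htN.trans le_self_add), tsub_eq_zero_of_le htN, add_zero]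
    · rw [min_eq_right hNt, add_tsub_cancel_of_le (le_min hNt le_self_add)]

lemma tsum_layer (t : ℝ≥0∞) : ∑' n, layer n t = t := by
  rw [ENNReal.tsum_eq_iSup_nat]
  simp_rw [sum_range_layer]
  rw [← inf_iSup_eq]
  simp [ENNReal.iSup_natCast]

lemma exists_measure_Ioi_eq_of_ne_top {G : ℝ → ℝ≥0∞} (hG : Antitone G)
    (hrc : ∀ x, ContinuousWithinAt G (Ici x) x) (htop : Tendsto G atTop (𝓝 0))
    (hfin : ∀ x, G x ≠ ∞) : ∃ μ : Measure ℝ, ∀ x, μ (Ioi x) = G x := by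
  let f : StieltjesFunction ℝ :=
    { toFun := fun x => -(G x).toReal
      mono' := fun x y hxy => neg_le_neg (ENNReal.toReal_mono (hfin x) (hG hxy))
      right_continuous' := fun x =>
        ((ENNReal.continuousAt_toReal (hfin x)).comp_continuousWithinAt (hrc x)).neg }
  have hf : Tendsto f atTop (𝓝 0) := by
    simpa using ((ENNReal.tendsto_toReal ENNReal.zero_ne_top).comp htop).neg
  refine ⟨f.measure, fun x => ?_⟩
  rw [f.measure_Ioi hf]
  simp [f, ENNReal.ofReal_toReal (hfin x)]

theorem exists_measure_Ioi_eq {G : ℝ → ℝ≥0∞} (hG : Antitone G)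
    (hrc : ∀ x, ContinuousWithinAt G (Ici x) x) (htop : Tendsto G atTop (𝓝 0)) :
    ∃ μ : Measure ℝ, ∀ x, μ (Ioi x) = G x := by
  have hlayer (n : ℕ) : ∃ μ : Measure ℝ, ∀ x, μ (Ioi x) = layer n (G x) := by
    refine exists_measure_Ioi_eq_of_ne_top ((monotone_layer n).comp_antitone hG)
      (fun x => (continuous_layer n).continuousAt.comp_continuousWithinAt (hrc x)) ?_
      (fun x => layer_ne_top n _)
    have h := ((continuous_layer n).tendsto 0).comp htop
    rwa [layer_zero_right] at h
  choose μ hμ using hlayer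
  refine ⟨Measure.sum μ, fun x => ?_⟩
  simp_rw [Measure.sum_apply _ measurableSet_Ioi, hμ, tsum_layer]

def negLog (t : ℝ≥0∞) : ℝ≥0∞ := (-ENNReal.log t).toENNReal

lemma antitone_negLog : Antitone negLog :=
  fun _ _ hst => EReal.toENNReal_le_toENNReal (EReal.neg_le_neg_iff.2 (ENNReal.log_monotone hst))

lemma continuous_negLog : Continuous negLog :=
  EReal.continuous_toENNReal.comp (continuous_neg.comp ENNReal.continuous_log)

@[simp] lemma negLog_zero : negLog 0 = ∞ := by
  simp [negLog]

@[simp] lemma negLog_one : negLog 1 = 0 := by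
  simp [negLog]

lemma negLog_ofReal {h : ℝ} (hh : 0 < h) :
    negLog (ENNReal.ofReal h) = ENNReal.ofReal (-Real.log h) := by
  rw [negLog, ENNReal.log_ofReal_of_pos hh, ← EReal.coe_neg, EReal.real_coe_toENNReal]

end

/-- Exponent-measure representation in dimension one: every distribution function `H`
admits a Borel measure `μ` with `μ((x,∞)) = ∞` where `H(x) = 0`, and
`H(x) = exp(−μ((x,∞)))` (with `μ((x,∞)) < ∞`) where `H(x) > 0`. -/
theorem exists_exponent_measure
    (H : ℝ → ℝ) (hH : IsDF H) :
    ∃ μ : Measure ℝ, ∀ x : ℝ,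
      (H x = 0 → μ (Ioi x) = ⊤) ∧
      (0 < H x → μ (Ioi x) ≠ ⊤ ∧ H x = Real.exp (-(μ (Ioi x)).toReal)) := by
  obtain ⟨hmono, hrc, -, htop⟩ := hH
  have hcont : Continuous fun t => negLog (ENNReal.ofReal t) :=
    continuous_negLog.comp ENNReal.continuous_ofReal
  obtain ⟨μ, hμ⟩ := exists_measure_Ioi_eq (G := fun x => negLog (ENNReal.ofReal (H x)))
    (antitone_negLog.comp_monotone (ENNReal.ofReal_mono.comp hmono))
    (fun x => hcont.continuousAt.comp_continuousWithinAt (hrc x))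
    (by simpa [Function.comp_def] using (hcont.tendsto 1).comp htop)
  refine ⟨μ, fun x => ⟨fun h0 => by simp [hμ, h0], fun hpos => ?_⟩⟩
  have hlog : 0 ≤ -Real.log (H x) :=
    neg_nonneg.2 (Real.log_nonpos hpos.le (hmono.ge_of_tendsto htop x))
  rw [hμ, negLog_ofReal hpos, ENNReal.toReal_ofReal hlog, neg_neg, Real.exp_log hpos]
  exact ⟨ENNReal.ofReal_ne_top, rfl⟩
end
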